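/- Let n ≥ 1, N = 2^n, let S ⊆ Fin N have size s with s < N, and let t be an integer with s ≤ t ≤ N. Let U_0, …, U_q (q ≥ 1) be unitaries on H = H_in ⊗ ℂ^N ⊗ ℂ² ⊗ ℂ^W for a finite-dimensional complex Hilbert space H_in and integer W ≥ 1, and let ψ_in ∈ H_in be any fixed unit vector. For a predicate h : Fin N → Bool define Ψ_0^h = U_0(ψ_in ⊗ e_0 ⊗ e_0 ⊗ e_0) and Ψ_{i+1}^h = U_{i+1}(I_{H_in} ⊗ O_h ⊗ I_W)Ψ_i^h. Then the average, over all subsets T with S ⊆ T ⊆ Fin N and #T = t, of ‖Ψ_q^{1_S} − Ψ_q^{1_T}‖ is at most 2q·√((t−s)/(N−s)). -/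

import Mathlib

set_option linter.unusedSectionVars false
set_option maxHeartbeats 1000000


noncomputable section

/-- Apply a square matrix to a vector of a Euclidean space. -/
def matApply {κ : Type} [Fintype κ] (M : Matrix κ κ ℂ) (ψ : EuclideanSpace ℂ κ) :
    EuclideanSpace ℂ κ :=
  WithLp.toLp 2 (fun i => ∑ j, M i j * ψ j)

/-- The oracle unitary `I_{H_in} ⊗ O_h ⊗ I_W` on `H_in ⊗ ℂ^N ⊗ ℂ² ⊗ ℂ^W`,
where `O_h (e_x ⊗ e_b) = e_x ⊗ e_{b XOR h x}`, applied to a vector. -/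
def oracleApply {ι τ : Type} {N : ℕ} (h : Fin N → Bool)
    (ψ : EuclideanSpace ℂ (ι × Fin N × Bool × τ)) :
    EuclideanSpace ℂ (ι × Fin N × Bool × τ) :=
  WithLp.toLp 2 (fun (p : ι × Fin N × Bool × τ) => ψ (p.1, p.2.1, xor p.2.2.1 (h p.2.1), p.2.2.2))

/-- The state of the algorithm `U_q O_h U_{q-1} ⋯ U_1 O_h U_0` after `i` queries,
given the oracle predicate `h` and the initial state `init`:
`Ψ 0 = U 0 init` and `Ψ (i+1) = U (i+1) (I ⊗ O_h ⊗ I) (Ψ i)`. -/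
def finalState {ι τ : Type} [Fintype ι] [Fintype τ] {N : ℕ}
    (U : ℕ → Matrix (ι × Fin N × Bool × τ) (ι × Fin N × Bool × τ) ℂ)
    (h : Fin N → Bool)
    (init : EuclideanSpace ℂ (ι × Fin N × Bool × τ)) :
    ℕ → EuclideanSpace ℂ (ι × Fin N × Bool × τ)
  | 0 => matApply (U 0) init
  | (i + 1) => matApply (U (i + 1)) (oracleApply h (finalState U h init i))

/-- The initial state `ψin ⊗ e_{x0} ⊗ e_false ⊗ e_{t0}` of `H_in ⊗ ℂ^N ⊗ ℂ² ⊗ ℂ^W`. -/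
def initEmbed {ι τ : Type} [DecidableEq τ] {N : ℕ} (x0 : Fin N) (t0 : τ)
    (ψin : EuclideanSpace ℂ ι) : EuclideanSpace ℂ (ι × Fin N × Bool × τ) :=
  WithLp.toLp 2 (fun (p : ι × Fin N × Bool × τ) => if p.2.1 = x0 ∧ p.2.2.1 = false ∧ p.2.2.2 = t0 then ψin p.1 else 0)

section helpers

variable {κ : Type} [Fintype κ] [DecidableEq κ]

lemma matApply_eq_mulVec (M : Matrix κ κ ℂ) (ψ : EuclideanSpace ℂ κ) :
    matApply M ψ = (WithLp.equiv 2 _).symm (M.mulVec (WithLp.equiv 2 _ ψ)) := rfl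

lemma inner_matApply (M : Matrix κ κ ℂ) (hM : M ∈ Matrix.unitaryGroup κ ℂ)
    (ψ φ : EuclideanSpace ℂ κ) :
    (inner ℂ (matApply M ψ) (matApply M φ) : ℂ) = inner ℂ ψ φ := by
  rw [matApply_eq_mulVec, matApply_eq_mulVec, WithLp.equiv_symm_apply,
    EuclideanSpace.inner_toLp_toLp,
    EuclideanSpace.inner_eq_star_dotProduct, dotProduct_comm, Matrix.star_mulVec,
    Matrix.dotProduct_mulVec,
    Matrix.vecMul_vecMul, ← Matrix.star_eq_conjTranspose,
    Matrix.mem_unitaryGroup_iff'.mp hM, Matrix.vecMul_one]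
  exact dotProduct_comm _ _

lemma norm_matApply (M : Matrix κ κ ℂ) (hM : M ∈ Matrix.unitaryGroup κ ℂ)
    (ψ : EuclideanSpace ℂ κ) : ‖matApply M ψ‖ = ‖ψ‖ := by
  have h1 := inner_matApply M hM ψ ψ
  have h2 : ‖matApply M ψ‖ ^ 2 = ‖ψ‖ ^ 2 := by
    rw [← inner_self_eq_norm_sq (𝕜 := ℂ), ← inner_self_eq_norm_sq (𝕜 := ℂ), h1]
  nlinarith [norm_nonneg (matApply M ψ), norm_nonneg ψ]

lemma matApply_sub (M : Matrix κ κ ℂ) (ψ φ : EuclideanSpace ℂ κ) :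
    matApply M (ψ - φ) = matApply M ψ - matApply M φ := by
  ext p
  simp only [matApply]
  show ∑ j, M p j * (ψ j - φ j) = (∑ j, M p j * ψ j) - ∑ j, M p j * φ j
  rw [← Finset.sum_sub_distrib]
  simp [mul_sub]

end helpers

section oracle

variable {ι τ : Type} [Fintype ι] [Fintype τ] {N : ℕ}

/-- The index permutation underlying the oracle. -/
def oracleEquiv (h : Fin N → Bool) : (ι × Fin N × Bool × τ) ≃ (ι × Fin N × Bool × τ) where
  toFun p := (p.1, p.2.1, xor p.2.2.1 (h p.2.1), p.2.2.2)
  invFun p := (p.1, p.2.1, xor p.2.2.1 (h p.2.1), p.2.2.2)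
  left_inv p := by
    obtain ⟨a, x, b, w⟩ := p
    simp [Bool.xor_assoc]
  right_inv p := by
    obtain ⟨a, x, b, w⟩ := p
    simp [Bool.xor_assoc]

lemma oracleApply_eq (h : Fin N → Bool) (ψ : EuclideanSpace ℂ (ι × Fin N × Bool × τ)) :
    oracleApply h ψ = fun p => ψ (oracleEquiv h p) := rfl

/-- Squared norm as a plain sum. -/
def nsq {κ : Type} [Fintype κ] (ψ : EuclideanSpace ℂ κ) : ℝ := ∑ p, ‖ψ p‖ ^ 2

lemma norm_eq_sqrt_nsq {κ : Type} [Fintype κ] (ψ : EuclideanSpace ℂ κ) :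
    ‖ψ‖ = Real.sqrt (nsq ψ) := EuclideanSpace.norm_eq ψ

lemma nsq_nonneg {κ : Type} [Fintype κ] (ψ : EuclideanSpace ℂ κ) : 0 ≤ nsq ψ :=
  Finset.sum_nonneg fun _ _ => sq_nonneg _

lemma nsq_eq_norm_sq {κ : Type} [Fintype κ] (ψ : EuclideanSpace ℂ κ) :
    nsq ψ = ‖ψ‖ ^ 2 := by
  rw [norm_eq_sqrt_nsq, Real.sq_sqrt (nsq_nonneg ψ)]

lemma norm_oracleApply (h : Fin N → Bool) (ψ : EuclideanSpace ℂ (ι × Fin N × Bool × τ)) :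
    ‖oracleApply h ψ‖ = ‖ψ‖ := by
  rw [norm_eq_sqrt_nsq, norm_eq_sqrt_nsq]
  congr 1
  rw [nsq, nsq, oracleApply_eq]
  exact Equiv.sum_comp (oracleEquiv h) (fun p => ‖ψ p‖ ^ 2)

lemma oracleApply_sub (h : Fin N → Bool) (ψ φ : EuclideanSpace ℂ (ι × Fin N × Bool × τ)) :
    oracleApply h (ψ - φ) = oracleApply h ψ - oracleApply h φ := rfl

end oracle

section diff

variable {ι τ : Type} [Fintype ι] [Fintype τ] {N : ℕ}

lemma nsq_oracle_diff_le (g h : Fin N → Bool) (ψ : EuclideanSpace ℂ (ι × Fin N × Bool × τ)) :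
    nsq (oracleApply g ψ - oracleApply h ψ) ≤
      4 * ∑ p ∈ Finset.univ.filter (fun p : ι × Fin N × Bool × τ => g p.2.1 ≠ h p.2.1),
        ‖ψ p‖ ^ 2 := by
  classical
  set A := Finset.univ.filter (fun p : ι × Fin N × Bool × τ => g p.2.1 ≠ h p.2.1) with hA
  have hterm : ∀ p : ι × Fin N × Bool × τ,
      ‖(oracleApply g ψ - oracleApply h ψ) p‖ ^ 2
        = if p ∈ A then ‖ψ (oracleEquiv g p) - ψ (oracleEquiv h p)‖ ^ 2 else 0 := by
    intro p
    have : (oracleApply g ψ - oracleApply h ψ) p = ψ (oracleEquiv g p) - ψ (oracleEquiv h p) := rfl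
    rw [this]
    by_cases hp : p ∈ A
    · rw [if_pos hp]
    · rw [if_neg hp]
      have hg : g p.2.1 = h p.2.1 := by
        simpa [hA] using hp
      have : oracleEquiv (τ := τ) (ι := ι) g p = oracleEquiv h p := by
        simp [oracleEquiv, hg]
      rw [this, sub_self, norm_zero]
      norm_num
  have h1 : nsq (oracleApply g ψ - oracleApply h ψ)
      = ∑ p ∈ A, ‖ψ (oracleEquiv g p) - ψ (oracleEquiv h p)‖ ^ 2 := by
    rw [nsq]
    rw [Finset.sum_congr rfl (fun p _ => hterm p), Finset.sum_ite_mem, Finset.univ_inter]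
  rw [h1]
  have h2 : ∑ p ∈ A, ‖ψ (oracleEquiv g p) - ψ (oracleEquiv h p)‖ ^ 2
      ≤ ∑ p ∈ A, (2 * ‖ψ (oracleEquiv g p)‖ ^ 2 + 2 * ‖ψ (oracleEquiv h p)‖ ^ 2) := by
    refine Finset.sum_le_sum fun p _ => ?_
    have := norm_sub_le (ψ (oracleEquiv g p)) (ψ (oracleEquiv h p))
    nlinarith [this, norm_nonneg (ψ (oracleEquiv g p)), norm_nonneg (ψ (oracleEquiv h p)),
      norm_nonneg (ψ (oracleEquiv g p) - ψ (oracleEquiv h p)),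
      sq_nonneg (‖ψ (oracleEquiv g p)‖ - ‖ψ (oracleEquiv h p)‖)]
  have key : ∀ f : Fin N → Bool, ∑ p ∈ A, ‖ψ (oracleEquiv f p)‖ ^ 2 = ∑ p ∈ A, ‖ψ p‖ ^ 2 := by
    intro f
    refine Finset.sum_nbij' (fun p => oracleEquiv f p) (fun p => (oracleEquiv f).symm p)
      ?_ ?_ ?_ ?_ ?_
    · intro p hp
      simp only [hA, Finset.mem_filter, Finset.mem_univ, true_and] at hp ⊢
      exact hp
    · intro p hp
      simp only [hA, Finset.mem_filter, Finset.mem_univ, true_and] at hp ⊢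
      have : ((oracleEquiv (τ := τ) (ι := ι) f).symm p).2.1 = p.2.1 := rfl
      rw [this]; exact hp
    · intro p _; exact (oracleEquiv f).left_inv p
    · intro p _; exact (oracleEquiv f).right_inv p
    · intro p _; rfl
  calc ∑ p ∈ A, ‖ψ (oracleEquiv g p) - ψ (oracleEquiv h p)‖ ^ 2
      ≤ ∑ p ∈ A, (2 * ‖ψ (oracleEquiv g p)‖ ^ 2 + 2 * ‖ψ (oracleEquiv h p)‖ ^ 2) := h2
    _ = 2 * (∑ p ∈ A, ‖ψ (oracleEquiv g p)‖ ^ 2) + 2 * ∑ p ∈ A, ‖ψ (oracleEquiv h p)‖ ^ 2 := by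
        rw [Finset.sum_add_distrib, Finset.mul_sum, Finset.mul_sum]
    _ = 4 * ∑ p ∈ A, ‖ψ p‖ ^ 2 := by rw [key g, key h]; ring

lemma norm_oracle_diff_le (g h : Fin N → Bool) (ψ : EuclideanSpace ℂ (ι × Fin N × Bool × τ)) :
    ‖oracleApply g ψ - oracleApply h ψ‖ ≤
      2 * Real.sqrt (∑ p ∈ Finset.univ.filter
          (fun p : ι × Fin N × Bool × τ => g p.2.1 ≠ h p.2.1), ‖ψ p‖ ^ 2) := by
  rw [norm_eq_sqrt_nsq]
  calc Real.sqrt (nsq (oracleApply g ψ - oracleApply h ψ))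
      ≤ Real.sqrt (4 * ∑ p ∈ Finset.univ.filter
          (fun p : ι × Fin N × Bool × τ => g p.2.1 ≠ h p.2.1), ‖ψ p‖ ^ 2) :=
        Real.sqrt_le_sqrt (nsq_oracle_diff_le g h ψ)
    _ = 2 * Real.sqrt (∑ p ∈ Finset.univ.filter
          (fun p : ι × Fin N × Bool × τ => g p.2.1 ≠ h p.2.1), ‖ψ p‖ ^ 2) := by
        rw [show (4:ℝ) = 2^2 by norm_num, Real.sqrt_mul (by positivity),
          Real.sqrt_sq (by norm_num : (0:ℝ) ≤ 2)]

end diff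

section state

variable {ι τ : Type} [Fintype ι] [Fintype τ] [DecidableEq ι] [DecidableEq τ] {N : ℕ}
variable (U : ℕ → Matrix (ι × Fin N × Bool × τ) (ι × Fin N × Bool × τ) ℂ)
variable (init : EuclideanSpace ℂ (ι × Fin N × Bool × τ))

lemma norm_finalState (q : ℕ) (hU : ∀ i ≤ q, U i ∈ Matrix.unitaryGroup _ ℂ)
    (h : Fin N → Bool) : ∀ i ≤ q, ‖finalState U h init i‖ = ‖init‖ := by
  intro i
  induction i with
  | zero => intro hi; rw [finalState, norm_matApply _ (hU 0 (Nat.zero_le q))]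
  | succ i ih =>
    intro hi
    rw [finalState, norm_matApply _ (hU _ hi), norm_oracleApply, ih (Nat.le_of_succ_le hi)]

lemma hybrid_bound (q : ℕ) (hU : ∀ i ≤ q, U i ∈ Matrix.unitaryGroup _ ℂ)
    (g h : Fin N → Bool) : ∀ i ≤ q,
    ‖finalState U g init i - finalState U h init i‖ ≤
      ∑ j ∈ Finset.range i,
        ‖oracleApply g (finalState U g init j) - oracleApply h (finalState U g init j)‖ := by
  intro i
  induction i with
  | zero => intro _; simp [finalState]
  | succ i ih =>
    intro hi
    have hii := Nat.le_of_succ_le hi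
    rw [finalState, finalState, ← matApply_sub, norm_matApply _ (hU _ hi), Finset.sum_range_succ]
    have tri : ‖oracleApply g (finalState U g init i) - oracleApply h (finalState U h init i)‖
        ≤ ‖oracleApply g (finalState U g init i) - oracleApply h (finalState U g init i)‖
          + ‖oracleApply h (finalState U g init i) - oracleApply h (finalState U h init i)‖ := by
      have := norm_sub_le_norm_sub_add_norm_sub
        (oracleApply g (finalState U g init i)) (oracleApply h (finalState U g init i))
        (oracleApply h (finalState U h init i))
      linarith
    have h2 : ‖oracleApply h (finalState U g init i) - oracleApply h (finalState U h init i)‖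
        = ‖finalState U g init i - finalState U h init i‖ := by
      rw [← oracleApply_sub, norm_oracleApply]
    calc ‖oracleApply g (finalState U g init i) - oracleApply h (finalState U h init i)‖
        ≤ ‖oracleApply g (finalState U g init i) - oracleApply h (finalState U g init i)‖
          + ‖finalState U g init i - finalState U h init i‖ := by rw [← h2]; exact tri
      _ ≤ (∑ j ∈ Finset.range i,
            ‖oracleApply g (finalState U g init j) - oracleApply h (finalState U g init j)‖)
          + ‖oracleApply g (finalState U g init i) - oracleApply h (finalState U g init i)‖ := by
          linarith [ih hii]
      _ = _ := by ring

lemma norm_initEmbed (x0 : Fin N) (t0 : τ) (ψin : EuclideanSpace ℂ ι) :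
    ‖initEmbed x0 t0 ψin‖ = ‖ψin‖ := by
  rw [norm_eq_sqrt_nsq, EuclideanSpace.norm_eq]
  congr 1
  rw [nsq]
  rw [Fintype.sum_prod_type]
  have : ∀ a : ι, ∑ p : Fin N × Bool × τ, ‖initEmbed x0 t0 ψin (a, p)‖ ^ 2 = ‖ψin a‖ ^ 2 := by
    intro a
    rw [show (fun p : Fin N × Bool × τ => ‖initEmbed x0 t0 ψin (a, p)‖ ^ 2)
      = fun p => if p = (x0, false, t0) then ‖ψin a‖ ^ 2 else 0 from ?_]
    · simp
    funext p
    obtain ⟨x, b, w⟩ := p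
    by_cases hx : x = x0 ∧ b = false ∧ w = t0
    · simp [initEmbed, hx, hx.1, hx.2.1, hx.2.2, Prod.ext_iff]
    · rw [show initEmbed x0 t0 ψin (a, x, b, w) = 0 from if_neg hx,
        if_neg (by simpa [Prod.ext_iff] using hx)]
      simp
  simp only [this]
end state

section counting

open Finset

variable {α : Type} [Fintype α] [DecidableEq α]

lemma card_supersets (S : Finset α) (t : ℕ) (hst : S.card ≤ t) :
    (univ.filter fun T : Finset α => S ⊆ T ∧ T.card = t).card
      = (Fintype.card α - S.card).choose (t - S.card) := by
  have hps : (Finset.powersetCard (t - S.card) ((univ : Finset α) \ S)).card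
      = (Fintype.card α - S.card).choose (t - S.card) := by
    rw [Finset.card_powersetCard, Finset.card_sdiff_of_subset (Finset.subset_univ S), Finset.card_univ]
  rw [← hps]
  refine Finset.card_nbij' (fun T => T \ S) (fun A => A ∪ S) ?_ ?_ ?_ ?_
  · intro T hT
    simp only [mem_coe, mem_filter, mem_univ, true_and] at hT
    rw [Finset.mem_coe, Finset.mem_powersetCard]
    exact ⟨sdiff_subset_sdiff (subset_univ T) le_rfl, by rw [card_sdiff_of_subset hT.1, hT.2]⟩
  · intro A hA
    rw [Finset.mem_coe, Finset.mem_powersetCard] at hA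
    have hdisj : Disjoint A S := Finset.disjoint_left.mpr fun a haA haS =>
      (Finset.mem_sdiff.mp (hA.1 haA)).2 haS
    simp only [mem_coe, mem_filter, mem_univ, true_and]
    refine ⟨Finset.subset_union_right, ?_⟩
    rw [Finset.card_union_of_disjoint hdisj, hA.2]
    omega
  · intro T hT
    simp only [mem_coe, mem_filter, mem_univ, true_and] at hT
    exact Finset.sdiff_union_of_subset hT.1
  · intro A hA
    rw [Finset.mem_coe, Finset.mem_powersetCard] at hA
    have hdisj : Disjoint A S := Finset.disjoint_left.mpr fun a haA haS =>
      (Finset.mem_sdiff.mp (hA.1 haA)).2 haS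
    show (A ∪ S) \ S = A
    rw [Finset.union_sdiff_right, Finset.sdiff_eq_self_of_disjoint hdisj]

lemma card_supersets_mem (S : Finset α) (t : ℕ) (hst : S.card < t) (x : α) (hx : x ∉ S) :
    ((univ.filter fun T : Finset α => S ⊆ T ∧ T.card = t).filter fun T => x ∈ T).card
      = (Fintype.card α - S.card - 1).choose (t - S.card - 1) := by
  have key : ((univ.filter fun T : Finset α => S ⊆ T ∧ T.card = t).filter fun T => x ∈ T)
      = univ.filter fun T : Finset α => insert x S ⊆ T ∧ T.card = t := by
    ext T
    simp only [mem_filter, mem_univ, true_and, Finset.insert_subset_iff]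
    tauto
  rw [key, card_supersets (insert x S) t (by rw [Finset.card_insert_of_notMem hx]; omega),
    Finset.card_insert_of_notMem hx]
  congr 1 <;> omega

end counting

section jensen

lemma avg_sqrt_le_sqrt_avg {β : Type} (F : Finset β) (a : β → ℝ) (ha : ∀ T ∈ F, 0 ≤ a T) :
    ((F.card : ℝ))⁻¹ * ∑ T ∈ F, Real.sqrt (a T)
      ≤ Real.sqrt (((F.card : ℝ))⁻¹ * ∑ T ∈ F, a T) := by
  rcases F.eq_empty_or_nonempty with rfl | hF
  · simp
  have hc : (0 : ℝ) < F.card := by positivity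
  rw [Real.le_sqrt (by positivity)]
  have cs := Finset.sum_mul_sq_le_sq_mul_sq F (fun _ => (1 : ℝ)) (fun T => Real.sqrt (a T))
  simp only [one_mul, one_pow] at cs
  have hsq : ∑ T ∈ F, Real.sqrt (a T) ^ 2 = ∑ T ∈ F, a T :=
    Finset.sum_congr rfl fun T hT => Real.sq_sqrt (ha T hT)
  rw [hsq] at cs
  have h1 : (∑ T ∈ F, Real.sqrt (a T)) ^ 2 ≤ (F.card : ℝ) * ∑ T ∈ F, a T := by
    simpa [Finset.sum_const, nsmul_eq_mul] using cs
  rw [mul_pow]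
  calc ((F.card:ℝ))⁻¹ ^ 2 * (∑ T ∈ F, Real.sqrt (a T)) ^ 2
      ≤ ((F.card:ℝ))⁻¹ ^ 2 * ((F.card : ℝ) * ∑ T ∈ F, a T) := by
        apply mul_le_mul_of_nonneg_left h1 (by positivity)
    _ = ((F.card:ℝ))⁻¹ * ∑ T ∈ F, a T := by
        field_simp
  exact mul_nonneg (by positivity) (Finset.sum_nonneg ha)

end jensen

section mainaux

open Finset

variable {ι τ : Type} [Fintype ι] [Fintype τ] [DecidableEq ι] [DecidableEq τ] {N : ℕ}

lemma sum_mass_le (S : Finset (Fin N)) (s t : ℕ) (hScard : S.card = s) (hst : s < t)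
    (ψ : EuclideanSpace ℂ (ι × Fin N × Bool × τ)) :
    ∑ T ∈ univ.filter (fun T : Finset (Fin N) => S ⊆ T ∧ T.card = t),
      ∑ p ∈ univ.filter (fun p : ι × Fin N × Bool × τ => p.2.1 ∈ T ∧ p.2.1 ∉ S), ‖ψ p‖ ^ 2
    ≤ ((N - s - 1).choose (t - s - 1) : ℝ) * nsq ψ := by
  classical
  set F := univ.filter (fun T : Finset (Fin N) => S ⊆ T ∧ T.card = t) with hF
  set c1 := (N - s - 1).choose (t - s - 1) with hc1
  calc ∑ T ∈ F, ∑ p ∈ univ.filter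
          (fun p : ι × Fin N × Bool × τ => p.2.1 ∈ T ∧ p.2.1 ∉ S), ‖ψ p‖ ^ 2
      = ∑ T ∈ F, ∑ p : ι × Fin N × Bool × τ,
          (if p.2.1 ∈ T ∧ p.2.1 ∉ S then ‖ψ p‖ ^ 2 else 0) := by
        exact Finset.sum_congr rfl fun T _ => Finset.sum_filter _ _
    _ = ∑ p : ι × Fin N × Bool × τ, ∑ T ∈ F,
          (if p.2.1 ∈ T ∧ p.2.1 ∉ S then ‖ψ p‖ ^ 2 else 0) := Finset.sum_comm
    _ = ∑ p : ι × Fin N × Bool × τ,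
          ((F.filter fun T => p.2.1 ∈ T ∧ p.2.1 ∉ S).card : ℝ) * ‖ψ p‖ ^ 2 := by
        refine Finset.sum_congr rfl fun p _ => ?_
        rw [← Finset.sum_filter, Finset.sum_const, nsmul_eq_mul]
    _ ≤ ∑ p : ι × Fin N × Bool × τ, (c1 : ℝ) * ‖ψ p‖ ^ 2 := by
        refine Finset.sum_le_sum fun p _ => ?_
        refine mul_le_mul_of_nonneg_right ?_ (sq_nonneg _)
        have : (F.filter fun T => p.2.1 ∈ T ∧ p.2.1 ∉ S).card ≤ c1 := by
          by_cases hp : p.2.1 ∈ S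
          · have : (F.filter fun T => p.2.1 ∈ T ∧ p.2.1 ∉ S) = ∅ :=
              Finset.filter_false_of_mem fun T _ => by simp [hp]
            simp [this]
          · have heq : (F.filter fun T => p.2.1 ∈ T ∧ p.2.1 ∉ S)
                = F.filter (fun T => p.2.1 ∈ T) := by
              apply Finset.filter_congr
              intro T _
              simp [hp]
            rw [heq, hF, card_supersets_mem S t (by omega) p.2.1 hp, Fintype.card_fin, hScard]
        exact_mod_cast this
    _ = (c1 : ℝ) * nsq ψ := by rw [← Finset.mul_sum]; rfl

theorem main_aux (s t q : ℕ) (S : Finset (Fin N)) (hScard : S.card = s) (hsN : s < N)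
    (hst : s ≤ t) (htN : t ≤ N)
    (U : ℕ → Matrix (ι × Fin N × Bool × τ) (ι × Fin N × Bool × τ) ℂ)
    (hU : ∀ i ≤ q, U i ∈ Matrix.unitaryGroup (ι × Fin N × Bool × τ) ℂ)
    (init : EuclideanSpace ℂ (ι × Fin N × Bool × τ)) (hinit : ‖init‖ = 1) :
    ((univ.filter fun T : Finset (Fin N) => S ⊆ T ∧ T.card = t).card : ℝ)⁻¹ *
        ∑ T ∈ univ.filter (fun T : Finset (Fin N) => S ⊆ T ∧ T.card = t),
          ‖finalState U (fun x => decide (x ∈ S)) init q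
            - finalState U (fun x => decide (x ∈ T)) init q‖
      ≤ 2 * q * Real.sqrt (((t : ℝ) - s) / ((N : ℝ) - s)) := by
  classical
  set F := univ.filter (fun T : Finset (Fin N) => S ⊆ T ∧ T.card = t) with hF
  rcases eq_or_lt_of_le hst with rfl | hlt
  · have hFS : F = {S} := by
      ext T
      simp only [hF, Finset.mem_filter, Finset.mem_univ, true_and, Finset.mem_singleton]
      constructor
      · rintro ⟨h1, h2⟩
        exact (Finset.eq_of_subset_of_card_le h1 (by omega)).symm
      · rintro rfl
        exact ⟨Finset.Subset.refl _, hScard⟩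
    rw [hFS, Finset.sum_singleton, sub_self, norm_zero, mul_zero]
    positivity
  · set r : ℝ := ((t : ℝ) - s) / ((N : ℝ) - s) with hr
    have hr0 : 0 ≤ r := by
      apply div_nonneg <;> [skip; skip] <;>
        · have h1 : (s:ℝ) ≤ t := by exact_mod_cast hst
          have h2 : (s:ℝ) ≤ N := by exact_mod_cast hsN.le
          first | linarith | linarith
    set Ψ := fun j => finalState U (fun x => decide (x ∈ S)) init j with hΨ
    set M : ℕ → Finset (Fin N) → ℝ := fun j T =>
      ∑ p ∈ univ.filter (fun p : ι × Fin N × Bool × τ => p.2.1 ∈ T ∧ p.2.1 ∉ S),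
        ‖Ψ j p‖ ^ 2 with hM
    have hMnonneg : ∀ j T, 0 ≤ M j T := fun j T =>
      Finset.sum_nonneg fun _ _ => sq_nonneg _
    have hΨnsq : ∀ j ≤ q, nsq (Ψ j) = 1 := by
      intro j hj
      rw [hΨ, nsq_eq_norm_sq, norm_finalState U init q hU _ j hj, hinit]
      norm_num
    have hcard : F.card = (N - s).choose (t - s) := by
      rw [hF, card_supersets S t (by omega), Fintype.card_fin, hScard]
    have hFpos : 0 < F.card := by
      rw [hcard]
      exact Nat.choose_pos (by omega)
    have hcpos : (0 : ℝ) < (F.card : ℝ) := by exact_mod_cast hFpos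
    -- per T hybrid + oracle bound
    have hperT : ∀ T ∈ F,
        ‖finalState U (fun x => decide (x ∈ S)) init q
            - finalState U (fun x => decide (x ∈ T)) init q‖
          ≤ ∑ j ∈ Finset.range q, 2 * Real.sqrt (M j T) := by
      intro T hT
      have hST : S ⊆ T := ((Finset.mem_filter.mp hT).2).1
      refine le_trans (hybrid_bound U init q hU _ _ q le_rfl)
        (Finset.sum_le_sum fun j hj => ?_)
      have hb := norm_oracle_diff_le (fun x => decide (x ∈ S)) (fun x => decide (x ∈ T)) (Ψ j)
      have hfe : (univ.filter fun p : ι × Fin N × Bool × τ =>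
            (fun x => decide (x ∈ S)) p.2.1 ≠ (fun x => decide (x ∈ T)) p.2.1)
          = univ.filter (fun p : ι × Fin N × Bool × τ => p.2.1 ∈ T ∧ p.2.1 ∉ S) := by
        ext p
        simp only [Finset.mem_filter, Finset.mem_univ, true_and, ne_eq, decide_eq_decide]
        by_cases h1 : p.2.1 ∈ S
        · have h2 := hST h1
          simp [h1, h2]
        · by_cases h2 : p.2.1 ∈ T <;> simp [h1, h2]
      rw [hfe] at hb
      exact hb
    -- averaged mass bound
    have havg_mass : ∀ j ≤ q, (F.card : ℝ)⁻¹ * ∑ T ∈ F, M j T ≤ r := by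
      intro j hj
      have h1 := sum_mass_le S s t hScard hlt (Ψ j)
      rw [hΨnsq j hj, mul_one] at h1
      have hnat : (N - s) * (N - s - 1).choose (t - s - 1)
          = (N - s).choose (t - s) * (t - s) := by
        have h2 := Nat.add_one_mul_choose_eq (N - s - 1) (t - s - 1)
        have e1 : N - s - 1 + 1 = N - s := by omega
        have e2 : t - s - 1 + 1 = t - s := by omega
        simp only [Nat.succ_eq_add_one, e1, e2] at h2
        exact h2
      have hNs : (0 : ℝ) < (N : ℝ) - s := by
        have : (s:ℝ) < N := by exact_mod_cast hsN
        linarith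
      have hcast : ((N:ℝ) - s) * ((N - s - 1).choose (t - s - 1) : ℝ)
          = (F.card : ℝ) * ((t:ℝ) - s) := by
        rw [hcard]
        have := congrArg (Nat.cast : ℕ → ℝ) hnat
        push_cast [Nat.cast_sub hsN.le, Nat.cast_sub hst] at this
        linarith
      have hratio : ((N - s - 1).choose (t - s - 1) : ℝ) = (F.card : ℝ) * r := by
        rw [hr]
        field_simp
        linarith [hcast]
      calc (F.card : ℝ)⁻¹ * ∑ T ∈ F, M j T
          ≤ (F.card : ℝ)⁻¹ * (((N - s - 1).choose (t - s - 1) : ℝ)) := by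
            exact mul_le_mul_of_nonneg_left h1 (by positivity)
        _ = r := by rw [hratio]; field_simp
    -- assemble
    calc (F.card : ℝ)⁻¹ * ∑ T ∈ F,
          ‖finalState U (fun x => decide (x ∈ S)) init q
            - finalState U (fun x => decide (x ∈ T)) init q‖
        ≤ (F.card : ℝ)⁻¹ * ∑ T ∈ F, ∑ j ∈ Finset.range q, 2 * Real.sqrt (M j T) := by
          exact mul_le_mul_of_nonneg_left (Finset.sum_le_sum hperT) (by positivity)
      _ = ∑ j ∈ Finset.range q, 2 * ((F.card : ℝ)⁻¹ * ∑ T ∈ F, Real.sqrt (M j T)) := by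
          rw [Finset.sum_comm, Finset.mul_sum]
          refine Finset.sum_congr rfl fun j _ => ?_
          rw [← Finset.mul_sum]
          ring
      _ ≤ ∑ j ∈ Finset.range q, 2 * Real.sqrt r := by
          refine Finset.sum_le_sum fun j hj => ?_
          have hj' : j ≤ q := le_of_lt (Finset.mem_range.mp hj)
          have hjen := avg_sqrt_le_sqrt_avg F (M j) (fun T _ => hMnonneg j T)
          have hmono := Real.sqrt_le_sqrt (havg_mass j hj')
          have := le_trans hjen hmono
          linarith
      _ = 2 * q * Real.sqrt r := by
          rw [Finset.sum_const, Finset.card_range, nsmul_eq_mul]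
          ring

end mainaux

theorem stmt_2 (n W q s t : ℕ) (hn : 1 ≤ n) (hW : 1 ≤ W) (hq : 1 ≤ q)
    (S : Finset (Fin (2 ^ n))) (hScard : S.card = s) (hsN : s < 2 ^ n)
    (hst : s ≤ t) (htN : t ≤ 2 ^ n)
    (ι : Type) [Fintype ι] [DecidableEq ι]
    (U : ℕ → Matrix (ι × Fin (2 ^ n) × Bool × Fin W) (ι × Fin (2 ^ n) × Bool × Fin W) ℂ)
    (hU : ∀ i ≤ q, U i ∈ Matrix.unitaryGroup (ι × Fin (2 ^ n) × Bool × Fin W) ℂ)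
    (ψin : EuclideanSpace ℂ ι) (hψin : ‖ψin‖ = 1) :
    ((Finset.univ.filter fun T : Finset (Fin (2 ^ n)) => S ⊆ T ∧ T.card = t).card : ℝ)⁻¹ *
        ∑ T ∈ Finset.univ.filter (fun T : Finset (Fin (2 ^ n)) => S ⊆ T ∧ T.card = t),
          ‖finalState U (fun x => decide (x ∈ S))
              (initEmbed (⟨0, pow_pos (by norm_num) n⟩ : Fin (2 ^ n)) (⟨0, hW⟩ : Fin W) ψin) q
            - finalState U (fun x => decide (x ∈ T))
              (initEmbed (⟨0, pow_pos (by norm_num) n⟩ : Fin (2 ^ n)) (⟨0, hW⟩ : Fin W) ψin) q‖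
      ≤ 2 * q * Real.sqrt (((t : ℝ) - s) / ((2 ^ n : ℕ) - s)) := by
  have hinit : ‖initEmbed (⟨0, pow_pos (by norm_num) n⟩ : Fin (2 ^ n)) (⟨0, hW⟩ : Fin W) ψin‖
      = 1 := by rw [norm_initEmbed, hψin]
  exact main_aux s t q S hScard hsN hst htN U hU _ hinit
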